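/- Let b ≥ 2, α ∈ ℝ, and g(n) = e(α·s_b(n)). Then for all θ ∈ ℝ and k ≥ 2, |Σ_{n < b^k} g(n)e(nθ)| ≤ b^k · exp(−(k−1)‖(b−1)α‖² / (4b³)). -/

import Mathlib

/-- `e(t) = exp(2πit)`. -/
noncomputable def e (t : ℝ) : ℂ := Complex.exp (2 * Real.pi * Complex.I * t)

/-- Sum of base-`b` digits of `n`. -/
def digitSum (b n : ℕ) : ℕ := (Nat.digits b n).sum

/-- Distance from `x` to the nearest integer. -/
noncomputable def nint (x : ℝ) : ℝ := |x - round x|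

/-!
Writing `n < b^k` through its digits, `s_b` is additive over digits and `e(nθ)` factors over
digit positions, so the sum is `∏_{i<k} ∑_{m<b} e(m(α + b^i θ))`. Each factor has size at most
`b·exp(-‖α + b^i θ‖²/b)`, because its two terms `m = 0, 1` already lose `4‖·‖²` against the
trivial bound. Finally `b(α + b^i θ) - (α + b^{i+1} θ) = (b-1)α`, so consecutive distances
`‖α + b^i θ‖`, `‖α + b^{i+1} θ‖` cannot both be small compared with `‖(b-1)α‖ / b`.
-/

open Finset Real

lemma e_eq_exp_ofReal_mul_I (t : ℝ) : e t = Complex.exp ((2 * π * t : ℝ) * Complex.I) := by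
  rw [e]; push_cast; ring_nf

lemma e_add (x y : ℝ) : e (x + y) = e x * e y := by
  rw [e, e, e, ← Complex.exp_add]; push_cast; ring_nf

@[simp] lemma e_zero : e 0 = 1 := by simp [e]

@[simp] lemma norm_e (t : ℝ) : ‖e t‖ = 1 := by
  rw [e_eq_exp_ofReal_mul_I, Complex.norm_exp_ofReal_mul_I]

lemma norm_one_add_e_sq (β : ℝ) : ‖1 + e β‖ ^ 2 = 2 + 2 * cos (2 * π * β) := by
  have hre := Complex.exp_ofReal_mul_I_re (2 * π * β)
  have him := Complex.exp_ofReal_mul_I_im (2 * π * β)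
  rw [← e_eq_exp_ofReal_mul_I] at hre him
  rw [Complex.sq_norm, Complex.normSq_apply]
  simp only [Complex.add_re, Complex.add_im, Complex.one_re, Complex.one_im, hre, him]
  nlinarith [sin_sq_add_cos_sq (2 * π * β)]

lemma nint_eq_norm (x : ℝ) : nint x = ‖(x : UnitAddCircle)‖ := UnitAddCircle.norm_eq.symm

lemma nint_nonneg (x : ℝ) : 0 ≤ nint x := abs_nonneg _

lemma nint_le_half (x : ℝ) : nint x ≤ 1 / 2 := abs_sub_round x

lemma nint_sub_le (x y : ℝ) : nint (x - y) ≤ nint x + nint y := by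
  simpa only [nint_eq_norm, AddCircle.coe_sub] using norm_sub_le _ _

lemma nint_nat_mul_le (n : ℕ) (x : ℝ) : nint (n * x) ≤ n * nint x := by
  simpa only [nint_eq_norm, ← nsmul_eq_mul, AddCircle.coe_nsmul] using norm_nsmul_le

lemma cos_two_pi_mul_le (β : ℝ) : cos (2 * π * β) ≤ 1 - 8 * nint β ^ 2 := by
  have hperiodic : cos (2 * π * β) = cos (2 * π * (β - round β)) := by
    rw [← cos_add_int_mul_two_pi (2 * π * (β - round β)) (round β)]; ring_nf
  have habs : |2 * π * (β - round β)| = 2 * π * nint β := by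
    rw [abs_mul, abs_of_pos two_pi_pos, nint]
  have hsmall : |2 * π * (β - round β)| ≤ π := by
    rw [habs]; nlinarith [nint_le_half β, pi_pos]
  calc cos (2 * π * β) ≤ 1 - 2 / π ^ 2 * (2 * π * (β - round β)) ^ 2 := by
        rw [hperiodic]; exact cos_le_one_sub_mul_cos_sq hsmall
    _ = 1 - 8 * nint β ^ 2 := by
        rw [← sq_abs (2 * π * (β - round β)), habs]; field_simp; ring

lemma norm_one_add_e_le (β : ℝ) : ‖1 + e β‖ ≤ 2 - 4 * nint β ^ 2 := by
  have h0 := nint_nonneg β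
  have hhalf := nint_le_half β
  refine (sq_le_sq₀ (norm_nonneg _) (by nlinarith)).1 ?_
  rw [norm_one_add_e_sq]
  nlinarith [cos_two_pi_mul_le β, pow_nonneg h0 4]

lemma norm_sum_range_e_mul_le {b : ℕ} (hb : 2 ≤ b) (β : ℝ) :
    ‖∑ m ∈ range b, e (m * β)‖ ≤ b - 4 * nint β ^ 2 := by
  obtain ⟨c, rfl⟩ : ∃ c, b = c + 2 := ⟨b - 2, by omega⟩
  have hsplit :
      ∑ m ∈ range (c + 2), e (m * β) = ∑ m ∈ range c, e ((m + 2) * β) + (1 + e β) := by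
    rw [sum_range_succ', sum_range_succ']
    simp only [Nat.cast_add, Nat.cast_one, Nat.cast_ofNat, CharP.cast_eq_zero, zero_add, zero_mul,
      one_mul, e_zero, add_assoc, one_add_one_eq_two, add_comm (e β)]
  have htail : ‖∑ m ∈ range c, e ((m + 2) * β)‖ ≤ c := by
    simpa using norm_sum_le_of_le (range c) fun m _ => (norm_e ((m + 2) * β)).le
  rw [hsplit]
  refine (norm_add_le _ _).trans ?_
  push_cast
  linarith [norm_one_add_e_le β]

lemma norm_sum_range_e_mul_le_exp {b : ℕ} (hb : 2 ≤ b) (β : ℝ) :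
    ‖∑ m ∈ range b, e (m * β)‖ ≤ b * exp (-(nint β ^ 2 / b)) := by
  have hb0 : (0 : ℝ) < b := by positivity
  calc ‖∑ m ∈ range b, e (m * β)‖ ≤ b - 4 * nint β ^ 2 := norm_sum_range_e_mul_le hb β
    _ ≤ b * (-(nint β ^ 2 / b) + 1) := by
        rw [mul_add, mul_neg, mul_div_cancel₀ _ hb0.ne']; nlinarith [sq_nonneg (nint β)]
    _ ≤ b * exp (-(nint β ^ 2 / b)) := by gcongr; exact add_one_le_exp _

lemma sum_range_mul_eq_sum_sum {M : Type*} [AddCommMonoid M] (f : ℕ → M) (b N : ℕ) :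
    ∑ n ∈ range (b * N), f n = ∑ m ∈ range N, ∑ r ∈ range b, f (r + b * m) := by
  induction N with
  | zero => simp
  | succ N ih =>
    rw [Nat.mul_succ, sum_range_add, ih, sum_range_succ]
    simp_rw [add_comm (b * N)]

lemma digitSum_add_mul {b r : ℕ} (hb : 1 < b) (hr : r < b) (m : ℕ) :
    digitSum b (r + b * m) = r + digitSum b m := by
  by_cases h : r = 0 ∧ m = 0
  · obtain ⟨rfl, rfl⟩ := h
    simp [digitSum]
  · rw [digitSum, Nat.digits_add b hb r m hr (by tauto), List.sum_cons, digitSum]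

theorem sum_range_pow_e_digitSum {b : ℕ} (hb : 1 < b) (α : ℝ) (k : ℕ) (θ : ℝ) :
    ∑ n ∈ range (b ^ k), e (α * digitSum b n + n * θ) =
      ∏ i ∈ range k, ∑ m ∈ range b, e (m * (α + b ^ i * θ)) := by
  induction k generalizing θ with
  | zero => simp [digitSum]
  | succ k ih =>
    have hdigit : ∀ m, ∀ r ∈ range b, e (α * digitSum b (r + b * m) + ↑(r + b * m) * θ) =
        e (α * digitSum b m + m * (b * θ)) * e (r * (α + θ)) := by
      intro m r hr
      rw [digitSum_add_mul hb (mem_range.1 hr), ← e_add]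
      push_cast; ring_nf
    rw [pow_succ', sum_range_mul_eq_sum_sum]
    simp_rw [sum_congr rfl (hdigit _), ← mul_sum, ← sum_mul, ih, prod_range_succ', pow_zero,
      one_mul, pow_succ, mul_assoc]

lemma sum_range_add_succ_le {f : ℕ → ℝ} (hf : ∀ i, 0 ≤ f i) (n : ℕ) :
    ∑ i ∈ range n, (f i + f (i + 1)) ≤ 2 * ∑ i ∈ range (n + 1), f i := by
  rw [sum_add_distrib]
  linarith [sum_range_succ f n, sum_range_succ' f n, hf 0, hf n]

theorem sub_one_mul_nint_sq_le_sum {b : ℕ} (hb : 1 ≤ b) {x : ℕ → ℝ} {c : ℝ}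
    (hx : ∀ i, b * x i - x (i + 1) = c) (k : ℕ) :
    ((k : ℝ) - 1) * nint c ^ 2 ≤ 4 * b ^ 2 * ∑ i ∈ range k, nint (x i) ^ 2 := by
  have hb1 : (1 : ℝ) ≤ b := by exact_mod_cast hb
  have hpair : ∀ i, nint c ^ 2 ≤ 2 * b ^ 2 * (nint (x i) ^ 2 + nint (x (i + 1)) ^ 2) := by
    intro i
    have hle : nint c ≤ b * nint (x i) + nint (x (i + 1)) := by
      rw [← hx i]
      exact (nint_sub_le _ _).trans (add_le_add_left (nint_nat_mul_le b (x i)) _)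
    have hle' : nint c ≤ b * (nint (x i) + nint (x (i + 1))) := by
      nlinarith [nint_nonneg (x (i + 1))]
    calc nint c ^ 2 ≤ (b * (nint (x i) + nint (x (i + 1)))) ^ 2 :=
          pow_le_pow_left₀ (nint_nonneg c) hle' 2
      _ ≤ 2 * b ^ 2 * (nint (x i) ^ 2 + nint (x (i + 1)) ^ 2) := by
          nlinarith [mul_nonneg (sq_nonneg (b : ℝ)) (sq_nonneg (nint (x i) - nint (x (i + 1))))]
  rcases k with _ | n
  · simp only [Nat.cast_zero, range_zero, sum_empty, mul_zero]
    nlinarith [sq_nonneg (nint c)]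
  calc ((↑(n + 1) : ℝ) - 1) * nint c ^ 2 = ∑ i ∈ range n, nint c ^ 2 := by simp
    _ ≤ ∑ i ∈ range n, 2 * b ^ 2 * (nint (x i) ^ 2 + nint (x (i + 1)) ^ 2) :=
        sum_le_sum fun i _ => hpair i
    _ ≤ 4 * b ^ 2 * ∑ i ∈ range (n + 1), nint (x i) ^ 2 := by
        rw [← mul_sum]
        nlinarith [sum_range_add_succ_le (fun i => sq_nonneg (nint (x i))) n]

theorem digit_sum_fourier_Linf_bound_general (b k : ℕ) (hb : 2 ≤ b)
    (α θ : ℝ) :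
    ‖∑ n ∈ Finset.range (b ^ k), e (α * digitSum b n) * e (n * θ)‖ ≤
      (b : ℝ) ^ k *
        Real.exp (-(((k : ℝ) - 1) * nint ((b - 1 : ℝ) * α) ^ 2 / (4 * (b : ℝ) ^ 3))) := by
  set S := ∑ i ∈ range k, nint (α + b ^ i * θ) ^ 2
  have hb0 : (0 : ℝ) < b := by positivity
  have hS : ((k : ℝ) - 1) * nint ((b - 1 : ℝ) * α) ^ 2 ≤ 4 * b ^ 2 * S :=
    sub_one_mul_nint_sq_le_sum (by omega) (fun i => by rw [pow_succ]; ring) k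
  calc ‖∑ n ∈ range (b ^ k), e (α * digitSum b n) * e (n * θ)‖
      = ‖∏ i ∈ range k, ∑ m ∈ range b, e (m * (α + b ^ i * θ))‖ := by
        simp_rw [← e_add, sum_range_pow_e_digitSum (by omega : 1 < b)]
    _ ≤ ∏ i ∈ range k, (b * exp (-(nint (α + b ^ i * θ) ^ 2 / b))) := by
        rw [norm_prod]
        exact prod_le_prod (fun _ _ => norm_nonneg _)
          fun i _ => norm_sum_range_e_mul_le_exp hb _
    _ = b ^ k * exp (-(S / b)) := by
        rw [prod_mul_distrib, prod_const, card_range, ← exp_sum, sum_neg_distrib, sum_div]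
    _ ≤ b ^ k * exp (-(((k : ℝ) - 1) * nint ((b - 1 : ℝ) * α) ^ 2 / (4 * b ^ 3))) := by
        gcongr _ * exp (-?_)
        rw [div_le_div_iff₀ (by positivity) hb0]
        nlinarith

/-- For `b ≥ 2`, `α ∈ ℝ`, `g(n) = e(α s_b(n))`, and any `θ ∈ ℝ`, `k ≥ 2`,
`|∑_{n < b^k} g(n)e(nθ)| ≤ b^k · exp(−(k−1)‖(b−1)α‖² / (4b³))`. -/
theorem digit_sum_fourier_Linf_bound (b k : ℕ) (hb : 2 ≤ b) (hk : 2 ≤ k)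
    (α θ : ℝ) :
    ‖∑ n ∈ Finset.range (b ^ k), e (α * digitSum b n) * e (n * θ)‖ ≤
      (b : ℝ) ^ k *
        Real.exp (-(((k : ℝ) - 1) * nint ((b - 1 : ℝ) * α) ^ 2 / (4 * (b : ℝ) ^ 3))) :=
  digit_sum_fourier_Linf_bound_general b k hb α θ
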